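/- In the two-level least squares setting with the given QR decompositions, det A = ( (product of the diagonal entries of R) · ∏_{i=1}^m (product of the diagonal entries of Rᵢ) )². -/

import Mathlib

/-!
Multiplying the `i`-th row block of `B` by `Qᵢᵀ` does not change `BᵀB`, and turns that block
into `[C₁ᵢ | 0 … Rᵢ … 0]` over `[C₂ᵢ | 0]`. Regrouping the rows, `BᵀB = TᵀT + UᵀU` with
`T = [C₁ | diag Rᵢ]` and `U = [stack C₂ | 0]`, and `UᵀU = [Rᵀ R, 0; 0, 0]` because `Q` has
orthonormal columns. Hence `BᵀB = SᵀS` for the block lower triangular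
`S = [R, 0; C₁, diag Rᵢ]`, and `det (BᵀB) = (det S)²` is the squared product of the diagonals.
-/

open Matrix

/-- The two-level least-squares design matrix with row blocks
`[Bᵢ | 0 … B̊ᵢ … 0]`; the rows of block `i` are indexed by `Fin q ⊕ Fin (k i)`
(so that `nᵢ = q + k i ≥ q`). -/
def twoLevelB {p q m : ℕ} {k : Fin m → ℕ}
    (B1 : (i : Fin m) → Matrix (Fin q ⊕ Fin (k i)) (Fin p) ℝ)
    (B2 : (i : Fin m) → Matrix (Fin q ⊕ Fin (k i)) (Fin q) ℝ) :
    Matrix ((i : Fin m) × (Fin q ⊕ Fin (k i))) (Fin p ⊕ Fin m × Fin q) ℝ :=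
  Matrix.of fun x y =>
    match y with
    | Sum.inl a => B1 x.1 x.2 a
    | Sum.inr (i, b) => if x.1 = i then B2 x.1 x.2 b else 0

/-- `C₀ᵢ := Qᵢᵀ Bᵢ`. -/
def C0 {p q m : ℕ} {k : Fin m → ℕ}
    (Q1 : (i : Fin m) → Matrix (Fin q ⊕ Fin (k i)) (Fin q ⊕ Fin (k i)) ℝ)
    (B1 : (i : Fin m) → Matrix (Fin q ⊕ Fin (k i)) (Fin p) ℝ)
    (i : Fin m) : Matrix (Fin q ⊕ Fin (k i)) (Fin p) ℝ :=
  (Q1 i)ᵀ * B1 i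

/-- `C₁ᵢ`: the first `q` rows of `C₀ᵢ`. -/
def C1 {p q m : ℕ} {k : Fin m → ℕ}
    (Q1 : (i : Fin m) → Matrix (Fin q ⊕ Fin (k i)) (Fin q ⊕ Fin (k i)) ℝ)
    (B1 : (i : Fin m) → Matrix (Fin q ⊕ Fin (k i)) (Fin p) ℝ)
    (i : Fin m) : Matrix (Fin q) (Fin p) ℝ :=
  (C0 Q1 B1 i).submatrix Sum.inl id

/-- `C₂ᵢ`: the remaining `nᵢ − q` rows of `C₀ᵢ`. -/
def C2 {p q m : ℕ} {k : Fin m → ℕ}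
    (Q1 : (i : Fin m) → Matrix (Fin q ⊕ Fin (k i)) (Fin q ⊕ Fin (k i)) ℝ)
    (B1 : (i : Fin m) → Matrix (Fin q ⊕ Fin (k i)) (Fin p) ℝ)
    (i : Fin m) : Matrix (Fin (k i)) (Fin p) ℝ :=
  (C0 Q1 B1 i).submatrix Sum.inr id

/-- The row-stack of `C₂₁, …, C₂ₘ`. -/
def stackC2 {p q m : ℕ} {k : Fin m → ℕ}
    (Q1 : (i : Fin m) → Matrix (Fin q ⊕ Fin (k i)) (Fin q ⊕ Fin (k i)) ℝ)
    (B1 : (i : Fin m) → Matrix (Fin q ⊕ Fin (k i)) (Fin p) ℝ) :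
    Matrix ((i : Fin m) × Fin (k i)) (Fin p) ℝ :=
  Matrix.of fun x a => C2 Q1 B1 x.1 x.2 a

namespace Matrix

variable {R : Type*} [CommRing R] {l m n n₁ n₂ : Type*} [Fintype m]

theorem transpose_mul_self_submatrix_equiv [Fintype l] (M : Matrix m n R) (e : l ≃ m) :
    (M.submatrix e id)ᵀ * M.submatrix e id = Mᵀ * M := by
  rw [transpose_submatrix, submatrix_mul_equiv, submatrix_id_id]

theorem transpose_mul_self_orthogonal_mul [Fintype l] [DecidableEq m] {P : Matrix l m R}
    (hP : Pᵀ * P = 1) (M : Matrix m n R) : (P * M)ᵀ * (P * M) = Mᵀ * M := by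
  rw [transpose_mul, Matrix.mul_assoc, ← Matrix.mul_assoc Pᵀ, hP, Matrix.one_mul]

theorem transpose_mul_self_fromRows [Fintype l] (A : Matrix l n R) (B : Matrix m n R) :
    (fromRows A B)ᵀ * fromRows A B = Aᵀ * A + Bᵀ * B := by
  rw [transpose_fromRows, fromCols_mul_fromRows]

theorem transpose_mul_self_fromCols_zero (A : Matrix m n₁ R) :
    (fromCols A (0 : Matrix m n₂ R))ᵀ * fromCols A (0 : Matrix m n₂ R) =
      fromBlocks (Aᵀ * A) 0 0 0 := by
  rw [transpose_fromCols, fromRows_mul_fromCols]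
  simp

/-- `blockDiagonal` with the block index as the first coordinate. -/
def blockDiagonalLeft {o : Type*} [DecidableEq o] (M : o → Matrix n n R) :
    Matrix (o × n) (o × n) R :=
  (blockDiagonal M).submatrix (Equiv.prodComm _ _) (Equiv.prodComm _ _)

theorem det_blockDiagonalLeft {o : Type*} [Fintype o] [DecidableEq o] [Fintype n] [DecidableEq n]
    (M : o → Matrix n n R) : (blockDiagonalLeft M).det = ∏ i, (M i).det := by
  rw [blockDiagonalLeft, det_submatrix_equiv_self, det_blockDiagonal]

end Matrix

section TwoLevel

variable {p q m : ℕ} {k : Fin m → ℕ}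
  (Q1 : (i : Fin m) → Matrix (Fin q ⊕ Fin (k i)) (Fin q ⊕ Fin (k i)) ℝ)
  (B1 : (i : Fin m) → Matrix (Fin q ⊕ Fin (k i)) (Fin p) ℝ)
  (R1 : Fin m → Matrix (Fin q) (Fin q) ℝ)

def stackC1 : Matrix (Fin m × Fin q) (Fin p) ℝ :=
  Matrix.of fun x a => C1 Q1 B1 x.1 x.2 a

def twoLevelR (R : Matrix (Fin p) (Fin p) ℝ) :
    Matrix (Fin p ⊕ Fin m × Fin q) (Fin p ⊕ Fin m × Fin q) ℝ :=
  fromBlocks R 0 (stackC1 Q1 B1) (blockDiagonalLeft R1)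

theorem blockDiagonal'_mul_twoLevelB
    (P : (i : Fin m) → Matrix (Fin q ⊕ Fin (k i)) (Fin q ⊕ Fin (k i)) ℝ)
    (B2 : (i : Fin m) → Matrix (Fin q ⊕ Fin (k i)) (Fin q) ℝ) :
    blockDiagonal' P * twoLevelB B1 B2 =
      twoLevelB (fun i => P i * B1 i) (fun i => P i * B2 i) := by
  ext ⟨i, x⟩ (a | ⟨j, b⟩)
  · simp [twoLevelB, mul_apply, blockDiagonal'_apply, Fintype.sum_sigma]
  · obtain rfl | hij := eq_or_ne i j <;>
      simp [twoLevelB, mul_apply, blockDiagonal'_apply, Fintype.sum_sigma, *]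

def twoLevelRowEquiv :
    (Fin m × Fin q) ⊕ ((i : Fin m) × Fin (k i)) ≃ (i : Fin m) × (Fin q ⊕ Fin (k i)) :=
  ((Equiv.sigmaEquivProd _ _).symm.sumCongr (Equiv.refl _)).trans
    (Equiv.sigmaSumDistrib _ _).symm

theorem twoLevelB_C0_submatrix_twoLevelRowEquiv :
    (twoLevelB (C0 Q1 B1) (fun i => fromRows (R1 i) 0)).submatrix twoLevelRowEquiv id =
      fromRows (fromCols (stackC1 Q1 B1) (blockDiagonalLeft R1))
        (fromCols (stackC2 Q1 B1) 0) := by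
  ext (⟨i, b⟩ | ⟨i, x⟩) (a | ⟨j, c⟩) <;>
    simp [twoLevelB, twoLevelRowEquiv, stackC1, stackC2, C1, C2, blockDiagonalLeft,
      blockDiagonal_apply, Sigma.map]

-- The ascribed zero blocks make `*` elaborate to `Matrix`'s product rather than `CStarMatrix`'s.
variable {Q1 B1 R1} in
theorem transpose_mul_self_twoLevelB {B2 : (i : Fin m) → Matrix (Fin q ⊕ Fin (k i)) (Fin q) ℝ}
    (hQ1 : ∀ i, (Q1 i)ᵀ * Q1 i = 1) (hQ1' : ∀ i, Q1 i * (Q1 i)ᵀ = 1)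
    (hQR1 : ∀ i, B2 i = Q1 i * fromRows (R1 i) (0 : Matrix (Fin (k i)) (Fin q) ℝ))
    {s : ℕ} {Q : Matrix ((i : Fin m) × Fin (k i)) (Fin p ⊕ Fin s) ℝ} (hQ : Qᵀ * Q = 1)
    {R : Matrix (Fin p) (Fin p) ℝ}
    (hQR : stackC2 Q1 B1 = Q * fromRows R (0 : Matrix (Fin s) (Fin p) ℝ)) :
    (twoLevelB B1 B2)ᵀ * twoLevelB B1 B2 = (twoLevelR Q1 B1 R1 R)ᵀ * twoLevelR Q1 B1 R1 R := by
  have hfactor : twoLevelB B1 B2 =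
      blockDiagonal' Q1 * twoLevelB (C0 Q1 B1) fun i => fromRows (R1 i) 0 := by
    rw [blockDiagonal'_mul_twoLevelB, ← funext hQR1]
    congr
    funext i
    rw [C0, ← Matrix.mul_assoc, hQ1', Matrix.one_mul]
  have hdiag : (blockDiagonal' Q1)ᵀ * blockDiagonal' Q1 = 1 := by
    rw [blockDiagonal'_transpose, ← blockDiagonal'_mul, funext hQ1]
    exact blockDiagonal'_one
  have hstack : (stackC2 Q1 B1)ᵀ * stackC2 Q1 B1 = Rᵀ * R := by
    rw [hQR, transpose_mul_self_orthogonal_mul hQ, transpose_mul_self_fromRows]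
    simp
  calc (twoLevelB B1 B2)ᵀ * twoLevelB B1 B2
      = (twoLevelB (C0 Q1 B1) fun i => fromRows (R1 i) 0)ᵀ *
          twoLevelB (C0 Q1 B1) fun i => fromRows (R1 i) 0 := by
        rw [hfactor, transpose_mul_self_orthogonal_mul hdiag]
    _ = (fromCols (stackC1 Q1 B1) (blockDiagonalLeft R1))ᵀ *
            fromCols (stackC1 Q1 B1) (blockDiagonalLeft R1) +
          (fromCols (stackC2 Q1 B1) 0)ᵀ * fromCols (stackC2 Q1 B1) 0 := by
        rw [← transpose_mul_self_submatrix_equiv _ twoLevelRowEquiv,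
          twoLevelB_C0_submatrix_twoLevelRowEquiv, transpose_mul_self_fromRows]
    _ = (fromCols (stackC1 Q1 B1) (blockDiagonalLeft R1))ᵀ *
            fromCols (stackC1 Q1 B1) (blockDiagonalLeft R1) +
          (fromCols R 0)ᵀ * fromCols R 0 := by
        rw [transpose_mul_self_fromCols_zero, transpose_mul_self_fromCols_zero, hstack]
    _ = (twoLevelR Q1 B1 R1 R)ᵀ * twoLevelR Q1 B1 R1 R := by
        rw [twoLevelR, ← fromRows_fromCols_eq_fromBlocks, transpose_mul_self_fromRows, add_comm]

theorem det_twoLevelR {R : Matrix (Fin p) (Fin p) ℝ} (hR : R.BlockTriangular id)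
    (hR1 : ∀ i, (R1 i).BlockTriangular id) :
    (twoLevelR Q1 B1 R1 R).det = (∏ a, R a a) * ∏ i, ∏ b, R1 i b b := by
  rw [twoLevelR, det_fromBlocks_zero₁₂, det_of_isUpperTriangular hR, det_blockDiagonalLeft]
  simp only [det_of_isUpperTriangular (hR1 _)]

end TwoLevel

theorem twoLevelLS_det_general {p q m s : ℕ} {k : Fin m → ℕ}
    (B1 : (i : Fin m) → Matrix (Fin q ⊕ Fin (k i)) (Fin p) ℝ)
    (B2 : (i : Fin m) → Matrix (Fin q ⊕ Fin (k i)) (Fin q) ℝ)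
    (Q1 : (i : Fin m) → Matrix (Fin q ⊕ Fin (k i)) (Fin q ⊕ Fin (k i)) ℝ)
    (hQ1 : ∀ i, (Q1 i)ᵀ * Q1 i = 1) (hQ1' : ∀ i, Q1 i * (Q1 i)ᵀ = 1)
    (R1 : (i : Fin m) → Matrix (Fin q) (Fin q) ℝ)
    (hR1tri : ∀ i, (R1 i).BlockTriangular id)
    (hQR1 : ∀ i, B2 i = Q1 i * Matrix.fromRows (R1 i) 0)
    (Q : Matrix ((i : Fin m) × Fin (k i)) (Fin p ⊕ Fin s) ℝ)
    (hQ : Qᵀ * Q = 1)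
    (R : Matrix (Fin p) (Fin p) ℝ)
    (hRtri : R.BlockTriangular id)
    (hQR : stackC2 Q1 B1 = Q * Matrix.fromRows R 0)
    :
    ((twoLevelB B1 B2)ᵀ * twoLevelB B1 B2).det =
      ((∏ a, R a a) * ∏ i, ∏ b, R1 i b b) ^ 2 := by
  rw [transpose_mul_self_twoLevelB hQ1 hQ1' hQR1 hQ hQR, det_mul, det_transpose,
    det_twoLevelR Q1 B1 R1 hRtri hR1tri, sq]

theorem twoLevelLS_det {p q m s : ℕ} {k : Fin m → ℕ}
    (hp : 0 < p) (hq : 0 < q) (hm : 0 < m)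
    (B1 : (i : Fin m) → Matrix (Fin q ⊕ Fin (k i)) (Fin p) ℝ)
    (B2 : (i : Fin m) → Matrix (Fin q ⊕ Fin (k i)) (Fin q) ℝ)
    (hrank : (twoLevelB B1 B2).rank = p + m * q)
    (Q1 : (i : Fin m) → Matrix (Fin q ⊕ Fin (k i)) (Fin q ⊕ Fin (k i)) ℝ)
    (hQ1 : ∀ i, (Q1 i)ᵀ * Q1 i = 1) (hQ1' : ∀ i, Q1 i * (Q1 i)ᵀ = 1)
    (R1 : (i : Fin m) → Matrix (Fin q) (Fin q) ℝ)
    (hR1tri : ∀ i, (R1 i).BlockTriangular id)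
    (hR1 : ∀ i, IsUnit (R1 i).det)
    (hQR1 : ∀ i, B2 i = Q1 i * Matrix.fromRows (R1 i) 0)
    (Q : Matrix ((i : Fin m) × Fin (k i)) (Fin p ⊕ Fin s) ℝ)
    (hQ : Qᵀ * Q = 1) (hQ' : Q * Qᵀ = 1)
    (R : Matrix (Fin p) (Fin p) ℝ)
    (hRtri : R.BlockTriangular id) (hR : IsUnit R.det)
    (hQR : stackC2 Q1 B1 = Q * Matrix.fromRows R 0)
    :
    ((twoLevelB B1 B2)ᵀ * twoLevelB B1 B2).det =
      ((∏ a, R a a) * ∏ i, ∏ b, R1 i b b) ^ 2 :=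
  twoLevelLS_det_general B1 B2 Q1 hQ1 hQ1' R1 hR1tri hQR1 Q hQ R hRtri hQR
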